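/- Let F = T^2X^2 + TX^2Y ∈ Q_S. Then there exist no elements g_0, g_1 ∈ R = k[x,y] (homogeneous or not) such that t^2 g_0 + t g_1 + y ∈ Ann_S(F). Consequently, C = S/Ann_S(F) is not a free extension of A = k[t]/(t^3) with fiber B = k[x,y]/Ann_R(X^2) = k[x,y]/(x^3, y): it fails the condition that for every g ∈ Ann_R(X^2) there exist g_0, g_1 ∈ R with t^2g_0 + tg_1 + g ∈ Ann_S(F). -/

import Mathlib

open MvPolynomial

noncomputable section

variable {k : Type*} [Field k]

open Classical in
/-- Contraction action of `g ∈ k[x_1,…]` on `F ∈ k[X_1,…]`: the monomial `x^a` sends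
`X^b` to `X^(b-a)` if `a ≤ b` and to `0` otherwise, extended bilinearly. -/
def contract {σ : Type*} (g F : MvPolynomial σ k) : MvPolynomial σ k :=
  ∑ a ∈ g.support, ∑ b ∈ F.support,
    if a ≤ b then monomial (b - a) (g.coeff a * F.coeff b) else 0

/-- The annihilator `Ann(F) = {g : g ∘ F = 0}` (a set; it is in fact an ideal). -/
def annSet {σ : Type*} (F : MvPolynomial σ k) : Set (MvPolynomial σ k) :=
  {g | contract g F = 0}

/-- The annihilator ideal of `F` (since `annSet F` is closed under the ideal operations,
the span coincides with it). -/
def annIdeal {σ : Type*} (F : MvPolynomial σ k) : Ideal (MvPolynomial σ k) :=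
  Ideal.span (annSet F)

/-- `C` is a free module over `A` via the ring map `ι : A → C`. -/
def freeVia {A C : Type*} [CommRing A] [CommRing C] (ι : A →+* C) : Prop :=
  @Module.Free A C _ _ (Module.compHom C ι)

variable [CharZero k]

/-! Every `G ∈ Ann_S(F)` has zero `y`-coefficient, because the `x²t`- and `x²y`-coefficients of
`G ∘ F` are `G_t + G_y` and `G_t`. Hence `y ∉ Ann_S(F) + tS`: this excludes any
`t²g₀ + tg₁ + y ∈ Ann_S(F)`, and, as `π` kills `y`, it also contradicts `ker π = (t)`. -/

section Contract

variable {K : Type*} [Field K] {σ : Type*}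

theorem coeff_contract (g F : MvPolynomial σ K) (e : σ →₀ ℕ) :
    coeff e (contract g F)
      = ∑ b ∈ F.support, if e ≤ b then coeff (b - e) g * coeff b F else 0 := by
  classical
  simp only [contract, coeff_sum, apply_ite (coeff e), coeff_monomial, coeff_zero]
  rw [Finset.sum_comm]
  refine Finset.sum_congr rfl fun b _ => ?_
  split_ifs with heb
  · rw [Finset.sum_eq_single (b - e)]
    · simp [tsub_tsub_cancel_of_le heb]
    · intro a _ hab
      split_ifs with hab' hba
      · exact absurd (by rw [← hba, tsub_tsub_cancel_of_le hab']) hab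
      all_goals rfl
    · intro h; simp [notMem_support_iff.mp h]
  · refine Finset.sum_eq_zero fun a _ => ?_
    split_ifs with hab hba
    · exact absurd (hba ▸ tsub_le_self) heb
    all_goals rfl

theorem coeff_contract_of_support_subset (g F : MvPolynomial σ K) (e : σ →₀ ℕ)
    {U : Finset (σ →₀ ℕ)} (hU : F.support ⊆ U) :
    coeff e (contract g F)
      = ∑ b ∈ U, if e ≤ b then coeff (b - e) g * coeff b F else 0 := by
  rw [coeff_contract]
  exact Finset.sum_subset hU fun b _ hb => by simp [notMem_support_iff.mp hb]

theorem contract_add_left (g h F : MvPolynomial σ K) :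
    contract (g + h) F = contract g F + contract h F := by
  ext e
  simp only [coeff_add, coeff_contract, ← Finset.sum_add_distrib]
  refine Finset.sum_congr rfl fun b _ => ?_
  split_ifs <;> ring

theorem contract_add_right (g F G : MvPolynomial σ K) :
    contract g (F + G) = contract g F + contract g G := by
  classical
  ext e
  have hU : (F + G).support ⊆ F.support ∪ G.support := support_add
  rw [coeff_add, coeff_contract_of_support_subset g _ e hU,
    coeff_contract_of_support_subset g F e Finset.subset_union_left,
    coeff_contract_of_support_subset g G e Finset.subset_union_right, ← Finset.sum_add_distrib]
  refine Finset.sum_congr rfl fun b _ => ?_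
  split_ifs <;> simp [mul_add]

theorem coeff_contract_monomial (g : MvPolynomial σ K) (d e : σ →₀ ℕ) (c : K) :
    coeff e (contract g (monomial d c)) = if e ≤ d then coeff (d - e) g * c else 0 := by
  classical
  rw [coeff_contract_of_support_subset g _ e support_monomial_subset, Finset.sum_singleton,
    coeff_monomial, if_pos rfl]

theorem contract_monomial_eq_zero_iff (g : MvPolynomial σ K) (d : σ →₀ ℕ) {c : K}
    (hc : c ≠ 0) : contract g (monomial d c) = 0 ↔ ∀ a ∈ g.support, ¬ a ≤ d := by
  refine ⟨fun h a ha had => ?_, fun h => ?_⟩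
  · have := congrArg (coeff (d - a)) h
    rw [coeff_contract_monomial, if_pos tsub_le_self, tsub_tsub_cancel_of_le had,
      coeff_zero] at this
    exact mem_support_iff.mp ha (mul_eq_zero.mp this |>.resolve_right hc)
  · ext e
    rw [coeff_contract_monomial, coeff_zero]
    split_ifs with hed
    · rw [notMem_support_iff.mp fun hmem => h _ hmem tsub_le_self, zero_mul]
    · rfl

theorem coeff_contract_monomial_mul (g F : MvPolynomial σ K) (a e : σ →₀ ℕ) (c : K) :
    coeff e (contract (monomial a c * g) F) = c * coeff (e + a) (contract g F) := by
  simp only [coeff_contract, coeff_monomial_mul', Finset.mul_sum]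
  refine Finset.sum_congr rfl fun b _ => ?_
  by_cases heab : e + a ≤ b
  · have heb : e ≤ b := le_trans le_self_add heab
    have hab : a ≤ b - e := le_tsub_of_add_le_left heab
    rw [if_pos heb, if_pos hab, if_pos heab, tsub_tsub, mul_assoc]
  · rw [if_neg heab, mul_zero]
    split_ifs with heb hab
    · exact absurd (add_comm a e ▸ add_le_of_le_tsub_right_of_le heb hab) heab
    · exact zero_mul _
    · rfl

theorem contract_mul_eq_zero {g F : MvPolynomial σ K} (hg : contract g F = 0)
    (p : MvPolynomial σ K) : contract (p * g) F = 0 := by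
  induction p using MvPolynomial.induction_on' with
  | monomial a c => ext e; rw [coeff_contract_monomial_mul, hg]; simp
  | add p q hp hq => rw [add_mul, contract_add_left, hp, hq, add_zero]

theorem mem_annIdeal_iff {g F : MvPolynomial σ K} : g ∈ annIdeal F ↔ contract g F = 0 := by
  refine ⟨fun hg => ?_, fun hg => Ideal.subset_span hg⟩
  induction hg using Submodule.span_induction with
  | mem g hg => exact hg
  | zero => ext e; simp [coeff_contract]
  | add g h _ _ hg hh => rw [contract_add_left, hg, hh, add_zero]
  | smul p g _ hg => exact contract_mul_eq_zero hg p

end Contract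

section Example

variable {K : Type*} [Field K]

theorem annIdeal_X_zero_sq :
    annIdeal ((X 0 : MvPolynomial (Fin 2) K) ^ 2) = Ideal.span {X 0 ^ 3, X 1} := by
  have hspan : Ideal.span {(X 0 : MvPolynomial (Fin 2) K) ^ 3, X 1}
      = Ideal.span ((fun s => monomial s 1) '' {Finsupp.single 0 3, Finsupp.single 1 1}) := by
    rw [Set.image_pair, X_pow_eq_monomial, X]
  ext g
  rw [mem_annIdeal_iff, X_pow_eq_monomial, contract_monomial_eq_zero_iff _ _ one_ne_zero, hspan,
    mem_ideal_span_monomial_image]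
  refine forall₂_congr fun e _ => ?_
  simp [Finsupp.le_def, Fin.forall_fin_two, Finsupp.single_apply]
  omega

theorem coeff_single_one_one_eq_zero_of_contract_eq_zero {G : MvPolynomial (Fin 3) K}
    (hG : contract G (X 2 ^ 2 * X 0 ^ 2 + X 2 * X 0 ^ 2 * X 1) = 0) :
    coeff (Finsupp.single 1 1) G = 0 := by
  set u : Fin 3 →₀ ℕ := Finsupp.single 2 2 + Finsupp.single 0 2
  set v : Fin 3 →₀ ℕ := Finsupp.single 2 1 + Finsupp.single 0 2 + Finsupp.single 1 1
  have hF : (X 2 ^ 2 * X 0 ^ 2 + X 2 * X 0 ^ 2 * X 1 : MvPolynomial (Fin 3) K)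
      = monomial u 1 + monomial v 1 := by
    simp only [X, monomial_pow, monomial_mul, one_pow, mul_one, Finsupp.smul_single, smul_eq_mul,
      u, v]
  have hcoeff (e : Fin 3 →₀ ℕ) : coeff e (contract G (monomial u 1 + monomial v 1))
      = (if e ≤ u then coeff (u - e) G else 0) + (if e ≤ v then coeff (v - e) G else 0) := by
    simp only [contract_add_right, coeff_add, coeff_contract_monomial, mul_one]
  rw [hF] at hG
  have hxxt := hcoeff (Finsupp.single 0 2 + Finsupp.single 2 1)
  have hxxy := hcoeff (Finsupp.single 0 2 + Finsupp.single 1 1)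
  rw [hG, coeff_zero, if_pos (by simp [u, Finsupp.le_def, Fin.forall_fin_succ]),
    if_pos (by simp [v, Finsupp.le_def, Fin.forall_fin_succ])] at hxxt
  rw [hG, coeff_zero, if_neg (by simp [u, Finsupp.le_def, Fin.forall_fin_succ]),
    if_pos (by simp [v])] at hxxy
  have hu₁ : u - (Finsupp.single 0 2 + Finsupp.single 2 1) = Finsupp.single 2 1 := by
    ext i; fin_cases i <;> simp [u]
  have hv₁ : v - (Finsupp.single 0 2 + Finsupp.single 2 1) = Finsupp.single 1 1 := by
    ext i; fin_cases i <;> simp [v]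
  have hv₂ : v - (Finsupp.single 0 2 + Finsupp.single 1 1) = Finsupp.single 2 1 := by
    ext i; fin_cases i <;> simp [v]
  rw [hu₁, hv₁] at hxxt
  rw [hv₂] at hxxy
  linear_combination hxxy - hxxt

theorem contract_X_one_add_X_two_mul_ne_zero (h : MvPolynomial (Fin 3) K) :
    contract (X 1 + X 2 * h) (X 2 ^ 2 * X 0 ^ 2 + X 2 * X 0 ^ 2 * X 1) ≠ 0 := fun hG => by
  simpa [coeff_X_mul', coeff_X] using coeff_single_one_one_eq_zero_of_contract_eq_zero hG

end Example

theorem example_not_free_extension_general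
    (F : MvPolynomial (Fin 3) k) (hF : F = X 2 ^ 2 * X 0 ^ 2 + X 2 * X 0 ^ 2 * X 1)
    (ι : (Polynomial k ⧸ Ideal.span {(Polynomial.X : Polynomial k) ^ 3}) →ₐ[k]
      (MvPolynomial (Fin 3) k ⧸ annIdeal F))
    (π : (MvPolynomial (Fin 3) k ⧸ annIdeal F) →ₐ[k]
      (MvPolynomial (Fin 2) k ⧸ annIdeal ((X 0 : MvPolynomial (Fin 2) k) ^ 2)))
    (hπ : ∀ s : MvPolynomial (Fin 3) k,
      π (Ideal.Quotient.mk _ s) = Ideal.Quotient.mk _ (aeval ![X 0, X 1, 0] s)) :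
    -- B = k[x,y]/Ann(X²) = k[x,y]/(x³, y)
    annIdeal ((X 0 : MvPolynomial (Fin 2) k) ^ 2)
      = Ideal.span {(X 0 : MvPolynomial (Fin 2) k) ^ 3, X 1} ∧
    -- there are no g₀, g₁ with t²g₀ + tg₁ + y ∈ Ann_S(F)
    (¬ ∃ g₀ g₁ : MvPolynomial (Fin 2) k,
      contract (X 2 ^ 2 * rename Fin.castSucc g₀ + X 2 * rename Fin.castSucc g₁
        + rename Fin.castSucc (X 1)) F = 0) ∧
    -- the free-extension criterion of Lemma 3.4 fails
    (¬ ∀ g ∈ annSet ((X 0 : MvPolynomial (Fin 2) k) ^ 2),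
      ∃ g₀ g₁ : MvPolynomial (Fin 2) k,
        contract (X 2 ^ 2 * rename Fin.castSucc g₀ + X 2 * rename Fin.castSucc g₁
          + rename Fin.castSucc g) F = 0) ∧
    -- C is not a free extension of A with fiber B
    ¬ (freeVia ι.toRingHom ∧ Function.Surjective π ∧
        RingHom.ker π = Ideal.span {Ideal.Quotient.mk (annIdeal F) (X 2)}) := by
  have hy : (X 1 : MvPolynomial (Fin 2) k) ∈ annIdeal (X 0 ^ 2) := by
    rw [annIdeal_X_zero_sq]
    exact Ideal.subset_span (by simp)
  have hy_lift (h : MvPolynomial (Fin 3) k) : contract (X 1 + X 2 * h) F ≠ 0 :=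
    hF ▸ contract_X_one_add_X_two_mul_ne_zero h
  have hno_lift : ¬ ∃ g₀ g₁ : MvPolynomial (Fin 2) k,
      contract (X 2 ^ 2 * rename Fin.castSucc g₀ + X 2 * rename Fin.castSucc g₁
        + rename Fin.castSucc (X 1)) F = 0 := by
    rintro ⟨g₀, g₁, h⟩
    refine hy_lift (X 2 * rename Fin.castSucc g₀ + rename Fin.castSucc g₁) ?_
    convert h using 2
    simp only [rename_X, Fin.castSucc_one]
    ring
  refine ⟨annIdeal_X_zero_sq, hno_lift, fun hall => hno_lift (hall _ (mem_annIdeal_iff.mp hy)),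
    ?_⟩
  rintro ⟨-, -, hker⟩
  have hy_ker : Ideal.Quotient.mk (annIdeal F) (X 1) ∈ Ideal.span {Ideal.Quotient.mk _ (X 2)} := by
    rw [← hker, RingHom.mem_ker]
    simpa [hπ, Ideal.Quotient.eq_zero_iff_mem] using hy
  obtain ⟨z, hz⟩ := Ideal.mem_span_singleton'.mp hy_ker
  obtain ⟨s, rfl⟩ := Ideal.Quotient.mk_surjective z
  refine hy_lift (-s) (mem_annIdeal_iff.mp ?_)
  rw [← Ideal.Quotient.eq_zero_iff_mem, map_add, map_mul, map_neg, ← hz]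
  ring

/-- Example 3.9 (Example ex:1).  Let `R = k[x,y]`, `S = k[x,y,t]` (variables `x = X 0`,
`y = X 1`, `t = X 2` of `Fin 3`), and `F = T²X² + TX²Y ∈ Q_S`.  There are no
`g_0, g_1 ∈ R` with `t²g_0 + t g_1 + y ∈ Ann_S(F)`; consequently `C = S/Ann_S(F)` is not
a free extension of `A = k[t]/(t³)` with fiber `B = k[x,y]/Ann_R(X²) = k[x,y]/(x³,y)`:
it fails the condition that for every `g ∈ Ann_R(X²)` there exist `g_0, g_1` with
`t²g_0 + tg_1 + g ∈ Ann_S(F)`, and for the maps `ι, π` it is not a free extension. -/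
theorem example_not_free_extension
    (F : MvPolynomial (Fin 3) k) (hF : F = X 2 ^ 2 * X 0 ^ 2 + X 2 * X 0 ^ 2 * X 1)
    (ι : (Polynomial k ⧸ Ideal.span {(Polynomial.X : Polynomial k) ^ 3}) →ₐ[k]
      (MvPolynomial (Fin 3) k ⧸ annIdeal F))
    (hι : ι (Ideal.Quotient.mk _ Polynomial.X) = Ideal.Quotient.mk _ (X 2))
    (π : (MvPolynomial (Fin 3) k ⧸ annIdeal F) →ₐ[k]
      (MvPolynomial (Fin 2) k ⧸ annIdeal ((X 0 : MvPolynomial (Fin 2) k) ^ 2)))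
    (hπ : ∀ s : MvPolynomial (Fin 3) k,
      π (Ideal.Quotient.mk _ s) = Ideal.Quotient.mk _ (aeval ![X 0, X 1, 0] s)) :
    -- B = k[x,y]/Ann(X²) = k[x,y]/(x³, y)
    annIdeal ((X 0 : MvPolynomial (Fin 2) k) ^ 2)
      = Ideal.span {(X 0 : MvPolynomial (Fin 2) k) ^ 3, X 1} ∧
    -- there are no g₀, g₁ with t²g₀ + tg₁ + y ∈ Ann_S(F)
    (¬ ∃ g₀ g₁ : MvPolynomial (Fin 2) k,
      contract (X 2 ^ 2 * rename Fin.castSucc g₀ + X 2 * rename Fin.castSucc g₁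
        + rename Fin.castSucc (X 1)) F = 0) ∧
    -- the free-extension criterion of Lemma 3.4 fails
    (¬ ∀ g ∈ annSet ((X 0 : MvPolynomial (Fin 2) k) ^ 2),
      ∃ g₀ g₁ : MvPolynomial (Fin 2) k,
        contract (X 2 ^ 2 * rename Fin.castSucc g₀ + X 2 * rename Fin.castSucc g₁
          + rename Fin.castSucc g) F = 0) ∧
    -- C is not a free extension of A with fiber B
    ¬ (freeVia ι.toRingHom ∧ Function.Surjective π ∧
        RingHom.ker π = Ideal.span {Ideal.Quotient.mk (annIdeal F) (X 2)}) :=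
  example_not_free_extension_general F hF ι π hπ

end
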